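/- For any n, m ≥ 1, there exists a universal cycle for the word patterns of length n over [m]: if N is the number of patterns of length n over [m], then there is a function a : Z/NZ → [m] such that the map sending i ∈ Z/NZ to the cyclic window (a_{i+1}, a_{i+2}, ..., a_{i+n}) is a bijection from Z/NZ onto the set of patterns of length n over [m] (each pattern of length n over [m] occurs as a cyclic window exactly once). -/

import Mathlib

/-- `p` is a pattern: its set of letters is exactly `{1, ..., k}` for some `k ≥ 1`. -/
def IsPattern (p : List ℕ) : Prop :=
  ∃ k : ℕ, 1 ≤ k ∧ ∀ x : ℕ, x ∈ p ↔ (1 ≤ x ∧ x ≤ k)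

/-- `p` is a pattern all of whose letters lie in `[m] = {1, ..., m}`. -/
def PatternOver (m : ℕ) (p : List ℕ) : Prop :=
  IsPattern p ∧ ∀ x ∈ p, x ≤ m

/-- An `n`-pattern word over `[m]`: a word over `[m]` each of whose
contiguous subwords of length `n` is a pattern. -/
def IsNPatternWord (n m : ℕ) (w : List ℕ) : Prop :=
  (∀ x ∈ w, 1 ≤ x ∧ x ≤ m) ∧ ∀ u : List ℕ, u <:+: w → u.length = n → IsPattern u

/-- A set `S` of patterns of length `n` over `[m]` is unavoidable if the set of
`n`-pattern words over `[m]` containing no element of `S` as a subword is finite. -/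
def UnavoidableP (n m : ℕ) (S : Set (List ℕ)) : Prop :=
  {w : List ℕ | IsNPatternWord n m w ∧ ∀ s ∈ S, ¬ s <:+: w}.Finite

/-- `Tp n m`: the number of conjugacy classes (under cyclic rotation) of
patterns of length `n` over `[m]`. -/
noncomputable def Tp (n m : ℕ) : ℕ :=
  {C : Set (List ℕ) | ∃ p : List ℕ, p.length = n ∧ PatternOver m p ∧
    C = {q : List ℕ | p ~r q}}.ncard

section Euler

variable {V E : Type*}

/-- `UWalks s t v l w` : the list of edges `l` forms a walk from `v` to `w`. -/
def UWalks (s t : E → V) : V → List E → V → Prop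
  | v, [], w => w = v
  | v, e :: l, w => s e = v ∧ UWalks s t (t e) l w

theorem uwalks_append {s t : E → V} {v u w : V} {l1 l2 : List E}
    (h1 : UWalks s t v l1 u) (h2 : UWalks s t u l2 w) : UWalks s t v (l1 ++ l2) w := by
  induction l1 generalizing v with
  | nil => cases h1; simpa using h2
  | cons e l ih => exact ⟨h1.1, ih h1.2⟩

theorem uwalks_decomp {s t : E → V} {v w : V} {l1 l2 : List E}
    (h : UWalks s t v (l1 ++ l2) w) : ∃ u, UWalks s t v l1 u ∧ UWalks s t u l2 w := by
  induction l1 generalizing v with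
  | nil => exact ⟨v, rfl, h⟩
  | cons e l ih =>
    obtain ⟨u, hu1, hu2⟩ := ih h.2
    exact ⟨u, ⟨h.1, hu1⟩, hu2⟩

theorem uwalks_count [DecidableEq V] {s t : E → V} {v0 w : V} {l : List E}
    (h : UWalks s t v0 l w) (v : V) :
    l.countP (fun e => decide (s e = v)) + (if v = w then 1 else 0)
      = l.countP (fun e => decide (t e = v)) + (if v = v0 then 1 else 0) := by
  induction l generalizing v0 with
  | nil => cases h; rfl
  | cons e l ih =>
    obtain ⟨hs, hw⟩ := h
    have := ih hw
    simp only [List.countP_cons, decide_eq_true_eq]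
    subst hs
    by_cases h1 : v = s e <;> by_cases h2 : v = t e <;>
      simp [h1, h2, eq_comm] at this ⊢ <;> omega

theorem uwalks_get {s t : E → V} {v0 w : V} {l : List E} (h : UWalks s t v0 l w) :
    (∀ (j : ℕ) (hj : j + 1 < l.length), t (l.get ⟨j, by omega⟩) = s (l.get ⟨j+1, hj⟩)) ∧
    (∀ (h0 : 0 < l.length), s (l.get ⟨0, h0⟩) = v0 ∧ t (l.get ⟨l.length - 1, by omega⟩) = w) := by
  induction l generalizing v0 with
  | nil => exact ⟨fun j hj => by simp at hj, fun h0 => by simp at h0⟩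
  | cons e l ih =>
    obtain ⟨hs, hw⟩ := h
    obtain ⟨ih1, ih2⟩ := ih hw
    constructor
    · intro j hj
      match j with
      | 0 =>
        have h0 : 0 < l.length := by simpa using hj
        simpa using (ih2 h0).1.symm
      | (j'+1) =>
        have hj' : j' + 1 < l.length := by simpa using hj
        exact ih1 j' hj'
    · intro h0
      refine ⟨hs, ?_⟩
      rcases Nat.eq_zero_or_pos l.length with hl | hl
      · have : l = [] := List.length_eq_zero_iff.mp hl
        subst this
        cases hw; simp
      · have := (ih2 hl).2
        have hlen : (e :: l).length - 1 = l.length - 1 + 1 := by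
          simp; omega
        rw [show ((e :: l).get ⟨(e::l).length - 1, by omega⟩)
            = l.get ⟨l.length - 1, by omega⟩ by
          simp only [List.get_eq_getElem]
          rw [List.getElem_cons]
          simp [Nat.pos_iff_ne_zero.mp hl]]
        exact this

theorem countP_toFinset [DecidableEq E] {l : List E} (hl : l.Nodup) (p : E → Prop)
    [DecidablePred p] :
    (l.toFinset.filter p).card = l.countP (fun e => decide (p e)) := by
  rw [List.countP_eq_length_filter]
  have h1 : (l.filter (fun e => decide (p e))).toFinset = l.toFinset.filter p := by
    ext x; simp [List.mem_filter, and_comm]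
  rw [← h1, List.toFinset_card_of_nodup (hl.filter _)]

theorem trail_extend [DecidableEq E] {s t : E → V} [DecidableEq V] (F : Finset E)
    (balF : ∀ v, (F.filter (fun e => t e = v)).card = (F.filter (fun e => s e = v)).card) :
    ∀ (k : ℕ) (l : List E) (v0 w : V), F.card - l.length ≤ k → UWalks s t v0 l w →
      l.Nodup → (∀ e ∈ l, e ∈ F) →
      ∃ l', UWalks s t v0 l' v0 ∧ l'.Nodup ∧ (∀ e ∈ l', e ∈ F) ∧ l <+: l' := by
  intro k
  induction k with
  | zero =>
    intro l v0 w hk hw hnd hF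
    -- cannot extend: show w = v0 by the count argument, or contradiction
    by_cases hext : ∃ e, e ∈ F ∧ e ∉ l ∧ s e = w
    · -- l ∪ {e} ⊆ F nodup gives l.length + 1 ≤ F.card, contradicting hk
      obtain ⟨e, heF, hel, hse⟩ := hext
      exfalso
      have hsub : (e :: l).toFinset ⊆ F := by
        intro x hx
        simp at hx
        rcases hx with rfl | hx
        · exact heF
        · exact hF x hx
      have : (e :: l).toFinset.card ≤ F.card := Finset.card_le_card hsub
      rw [List.toFinset_card_of_nodup (by simp [hnd, hel])] at this
      simp at this; omega
    · -- maximal: w = v0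
      push_neg at hext
      have hwv : w = v0 := by
        by_contra hne
        have hc := uwalks_count hw w
        simp [hne] at hc
        have h1 : l.countP (fun e => decide (t e = w)) ≤ (F.filter (fun e => t e = w)).card := by
          rw [← countP_toFinset hnd]
          exact Finset.card_le_card (Finset.filter_subset_filter _ (by
            intro x hx; exact hF x (List.mem_toFinset.mp hx)))
        have h2 : (F.filter (fun e => s e = w)).card ≤ l.countP (fun e => decide (s e = w)) := by
          rw [← countP_toFinset hnd]
          apply Finset.card_le_card
          intro x hx
          simp only [Finset.mem_filter] at hx ⊢
          refine ⟨List.mem_toFinset.mpr ?_, hx.2⟩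
          by_contra hxl
          exact (hext x hx.1 hxl) hx.2
        have := balF w
        omega
      exact ⟨l, hwv ▸ hw, hnd, hF, List.prefix_refl l⟩
  | succ k ih =>
    intro l v0 w hk hw hnd hF
    by_cases hext : ∃ e, e ∈ F ∧ e ∉ l ∧ s e = w
    · obtain ⟨e, heF, hel, hse⟩ := hext
      have hw' : UWalks s t v0 (l ++ [e]) (t e) :=
        uwalks_append hw (by exact ⟨hse, rfl⟩)
      have hnd' : (l ++ [e]).Nodup := by
        rw [List.nodup_append]
        exact ⟨hnd, List.nodup_singleton e, fun a ha b hb hab => by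
          subst hab; rw [List.mem_singleton] at hb; subst hb; exact hel ha⟩
      have hF' : ∀ x ∈ l ++ [e], x ∈ F := by
        intro x hx; simp at hx
        rcases hx with hx | rfl
        · exact hF x hx
        · exact heF
      have hk' : F.card - (l ++ [e]).length ≤ k := by simp; omega
      obtain ⟨l', h1, h2, h3, h4⟩ := ih (l ++ [e]) v0 (t e) hk' hw' hnd' hF'
      exact ⟨l', h1, h2, h3, (List.prefix_append l [e]).trans h4⟩
    · push_neg at hext
      have hwv : w = v0 := by
        by_contra hne
        have hc := uwalks_count hw w
        simp [hne] at hc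
        have h1 : l.countP (fun e => decide (t e = w)) ≤ (F.filter (fun e => t e = w)).card := by
          rw [← countP_toFinset hnd]
          exact Finset.card_le_card (Finset.filter_subset_filter _ (by
            intro x hx; exact hF x (List.mem_toFinset.mp hx)))
        have h2 : (F.filter (fun e => s e = w)).card ≤ l.countP (fun e => decide (s e = w)) := by
          rw [← countP_toFinset hnd]
          apply Finset.card_le_card
          intro x hx
          simp only [Finset.mem_filter] at hx ⊢
          refine ⟨List.mem_toFinset.mpr ?_, hx.2⟩
          by_contra hxl
          exact (hext x hx.1 hxl) hx.2
        have := balF w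
        omega
      exact ⟨l, hwv ▸ hw, hnd, hF, List.prefix_refl l⟩

theorem uwalks_src_mem {s t : E → V} {v0 w : V} {l : List E} (h : UWalks s t v0 l w)
    {e : E} (he : e ∈ l) : s e = v0 ∨ ∃ c ∈ l, t c = s e := by
  induction l generalizing v0 with
  | nil => simp at he
  | cons e' l ih =>
    rcases List.mem_cons.mp he with rfl | he'
    · exact Or.inl h.1
    · rcases ih h.2 he' with h1 | ⟨c, hc, hc2⟩
      · exact Or.inr ⟨e', List.mem_cons_self, h1.symm⟩
      · exact Or.inr ⟨c, List.mem_cons_of_mem _ hc, hc2⟩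

theorem uwalks_tgt_mem {s t : E → V} {v0 w : V} {l : List E} (h : UWalks s t v0 l w)
    {e : E} (he : e ∈ l) : t e = w ∨ ∃ c ∈ l, s c = t e := by
  induction l generalizing v0 with
  | nil => simp at he
  | cons e' l ih =>
    rcases List.mem_cons.mp he with rfl | he'
    · rcases l.eq_nil_or_concat with rfl | _
      · cases h.2; exact Or.inl rfl
      · -- t e is the start of walk l, if l nonempty some c in l has s c = t e
        rcases l with _ | ⟨c, l'⟩
        · cases h.2; exact Or.inl rfl
        · exact Or.inr ⟨c, by simp, h.2.1⟩
    · rcases ih h.2 he' with h1 | ⟨c, hc, hc2⟩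
      · exact Or.inl h1
      · exact Or.inr ⟨c, List.mem_cons_of_mem _ hc, hc2⟩

/-- Walk the connectivity path until we exit the closed trail `C` through an unused edge. -/
theorem reach_escape {s t : E → V} {C : List E} {v0 : V}
    {x y : V} (hr : Relation.ReflTransGen (fun v w => ∃ d : E, s d = v ∧ t d = w) x y)
    (hx : x = v0 ∨ ∃ c ∈ C, t c = x) :
    (∃ e1, e1 ∉ C ∧ (s e1 = v0 ∨ ∃ c ∈ C, t c = s e1)) ∨ (y = v0 ∨ ∃ c ∈ C, t c = y) := by
  induction hr using Relation.ReflTransGen.head_induction_on with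
  | refl => exact Or.inr hx
  | head hstep _ ih =>
    obtain ⟨d, hd1, hd2⟩ := hstep
    by_cases hdC : d ∈ C
    · exact ih (Or.inr ⟨d, hdC, hd2⟩)
    · exact Or.inl ⟨d, hdC, hd1 ▸ hx⟩

theorem card_filter_split [Fintype E] [DecidableEq E] (A : Finset E) (p : E → Prop)
    [DecidablePred p] :
    (Finset.univ.filter p).card
      = ((Finset.univ \ A).filter p).card + (A.filter p).card := by
  have h1 : (Finset.univ \ A) ∪ A = Finset.univ :=
    Finset.sdiff_union_of_subset (Finset.subset_univ A)
  conv_lhs => rw [← h1]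
  rw [Finset.filter_union, Finset.card_union_of_disjoint]
  exact Finset.disjoint_filter_filter Finset.sdiff_disjoint

theorem euler_grow [Fintype E] [DecidableEq E] {s t : E → V} [DecidableEq V]
    (bal : ∀ v, (Finset.univ.filter (fun e : E => t e = v)).card
      = (Finset.univ.filter (fun e : E => s e = v)).card)
    (conn : ∀ e e' : E, Relation.ReflTransGen
      (fun v w => ∃ d : E, s d = v ∧ t d = w) (t e) (s e')) :
    ∀ (k : ℕ) (C : List E) (v0 : V), Fintype.card E - C.length ≤ k →
      UWalks s t v0 C v0 → C.Nodup → C ≠ [] →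
      ∃ (l : List E) (v1 : V), UWalks s t v1 l v1 ∧ l.Nodup ∧ ∀ e : E, e ∈ l := by
  intro k
  induction k with
  | zero =>
    intro C v0 hk hw hnd hne
    refine ⟨C, v0, hw, hnd, fun e => ?_⟩
    by_contra heC
    have h1 : C.toFinset ⊆ Finset.univ := Finset.subset_univ _
    have h2 : C.toFinset ≠ Finset.univ := by
      intro h; apply heC; rw [← List.mem_toFinset, h]; exact Finset.mem_univ e
    have := Finset.card_lt_card (lt_of_le_of_ne h1 h2)
    rw [List.toFinset_card_of_nodup hnd] at this
    simp [Finset.card_univ] at this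
    omega
  | succ k ih =>
    intro C v0 hk hw hnd hne
    by_cases hall : ∀ e : E, e ∈ C
    · exact ⟨C, v0, hw, hnd, hall⟩
    · push_neg at hall
      obtain ⟨e0, he0⟩ := hall
      obtain ⟨c0, hc0⟩ := List.exists_mem_of_ne_nil C hne
      have hesc := reach_escape (s := s) (t := t) (C := C) (v0 := v0)
        (conn c0 e0) (Or.inr ⟨c0, hc0, rfl⟩)
      have hkey : ∃ e1, e1 ∉ C ∧ (s e1 = v0 ∨ ∃ c ∈ C, t c = s e1) := by
        rcases hesc with h | h
        · exact h
        · exact ⟨e0, he0, h⟩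
      obtain ⟨e1, he1C, he1on⟩ := hkey
      set F : Finset E := Finset.univ \ C.toFinset with hF
      have hmemF : ∀ e : E, e ∈ F ↔ e ∉ C := by
        intro e; simp [hF]
      have balF : ∀ v, (F.filter (fun e => t e = v)).card
          = (F.filter (fun e => s e = v)).card := by
        intro v
        have hct := uwalks_count hw v
        have h1 := card_filter_split C.toFinset (fun e : E => t e = v)
        have h2 := card_filter_split C.toFinset (fun e : E => s e = v)
        have h3 : (C.toFinset.filter (fun e => t e = v)).card
            = C.countP (fun e => decide (t e = v)) := countP_toFinset hnd _
        have h4 : (C.toFinset.filter (fun e => s e = v)).card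
            = C.countP (fun e => decide (s e = v)) := countP_toFinset hnd _
        have h5 := bal v
        rw [hF] at *
        omega
      -- grow a closed trail of unused edges from s e1
      obtain ⟨D, hD, hDnd, hDF, hDpre⟩ := trail_extend F balF F.card [e1] (s e1) (t e1)
        (by omega) ⟨rfl, rfl⟩ (List.nodup_singleton e1)
        (by intro e he; rw [List.mem_singleton] at he
            exact (hmemF e).mpr (he ▸ he1C))
      have hDne : D ≠ [] := by
        intro h; subst h
        exact absurd (List.prefix_nil.mp hDpre) (by simp)
      have hDC : ∀ e ∈ D, e ∉ C := fun e he => (hmemF e).mp (hDF e he)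
      have hDlen : 0 < D.length := List.length_pos_iff.mpr hDne
      -- splice D into C
      rcases he1on with hv0 | ⟨c, hcC, hct⟩
      · -- s e1 = v0 : new trail is D ++ C
        rw [hv0] at hD
        have hw' : UWalks s t v0 (D ++ C) v0 := uwalks_append hD hw
        have hnd' : (D ++ C).Nodup := hDnd.append hnd hDC
        have hk' : Fintype.card E - (D ++ C).length ≤ k := by
          simp only [List.length_append]; omega
        exact ih (D ++ C) v0 hk' hw' hnd' (by simp [hne])
      · -- t c = s e1 for some c ∈ C : splice after c
        obtain ⟨C1, C2, rfl⟩ := List.append_of_mem hcC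
        obtain ⟨u, hu1, hu2⟩ := uwalks_decomp hw
        obtain ⟨hsc, hu3⟩ := hu2
        rw [← hct] at hD
        have hw' : UWalks s t v0 (C1 ++ c :: (D ++ C2)) v0 :=
          uwalks_append hu1 ⟨hsc, uwalks_append hD hu3⟩
        have hperm : (C1 ++ c :: (D ++ C2)).Perm ((C1 ++ c :: C2) ++ D) := by
          have p1 : (D ++ C2).Perm (C2 ++ D) := List.perm_append_comm
          have p2 : (c :: (D ++ C2)).Perm ((c :: C2) ++ D) := by simpa using p1.cons c
          have p3 := p2.append_left C1
          simpa [List.append_assoc] using p3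
        have hnd' : (C1 ++ c :: (D ++ C2)).Nodup := by
          refine hperm.nodup_iff.mpr ?_
          exact hnd.append hDnd (fun e he => fun heD => (hDC e heD) he)
        have hk' : Fintype.card E - (C1 ++ c :: (D ++ C2)).length ≤ k := by
          have : (C1 ++ c :: (D ++ C2)).length = (C1 ++ c :: C2).length + D.length := by
            simp; omega
          omega
        exact ih _ v0 hk' hw' hnd' (by simp)

theorem euler_exists [Fintype E] [DecidableEq E] {s t : E → V} [DecidableEq V]
    (bal : ∀ v, (Finset.univ.filter (fun e : E => t e = v)).card
      = (Finset.univ.filter (fun e : E => s e = v)).card)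
    (conn : ∀ e e' : E, Relation.ReflTransGen
      (fun v w => ∃ d : E, s d = v ∧ t d = w) (t e) (s e'))
    (e0 : E) :
    ∃ (l : List E) (v1 : V), UWalks s t v1 l v1 ∧ l.Nodup ∧ ∀ e : E, e ∈ l := by
  have balF : ∀ v, ((Finset.univ : Finset E).filter (fun e => t e = v)).card
      = ((Finset.univ : Finset E).filter (fun e => s e = v)).card := bal
  obtain ⟨C, hC, hCnd, _, hCpre⟩ := trail_extend Finset.univ balF Finset.univ.card
    [e0] (s e0) (t e0) (by omega) ⟨rfl, rfl⟩ (List.nodup_singleton e0)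
    (fun e _ => Finset.mem_univ e)
  have hCne : C ≠ [] := by
    intro h; subst h
    exact absurd (List.prefix_nil.mp hCpre) (by simp)
  exact euler_grow bal conn (Fintype.card E) C (s e0) (by omega) hC hCnd hCne

end Euler

section Patterns

/-- Maximum letter of a word (0 for the empty word). -/
def Mx (u : List ℕ) : ℕ := u.foldr max 0

theorem le_Mx {u : List ℕ} {y : ℕ} (h : y ∈ u) : y ≤ Mx u := by
  induction u with
  | nil => simp at h
  | cons a u ih =>
    rcases List.mem_cons.mp h with rfl | h
    · exact le_max_left _ _
    · exact le_trans (ih h) (le_max_right _ _)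

theorem Mx_mem {u : List ℕ} (h : u ≠ []) : Mx u ∈ u := by
  induction u with
  | nil => contradiction
  | cons a u ih =>
    rcases eq_or_ne u [] with rfl | hu
    · simp [Mx]
    · have hrfl : Mx (a :: u) = max a (Mx u) := rfl
      rcases max_choice a (Mx u) with hc | hc
      · rw [hrfl, hc]; exact List.mem_cons_self
      · rw [hrfl, hc]; exact List.mem_cons_of_mem _ (ih hu)

theorem Mx_append (u v : List ℕ) : Mx (u ++ v) = max (Mx u) (Mx v) := by
  induction u with
  | nil => simp [Mx]
  | cons a u ih => simp only [List.cons_append, Mx, List.foldr_cons] at ih ⊢; rw [ih, max_assoc]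

theorem isPattern_iff {p : List ℕ} :
    IsPattern p ↔ p ≠ [] ∧ (∀ y ∈ p, 1 ≤ y) ∧ ∀ y, 1 ≤ y → y ≤ Mx p → y ∈ p := by
  constructor
  · rintro ⟨k, hk, hiff⟩
    have h1 : 1 ∈ p := (hiff 1).mpr ⟨le_refl 1, hk⟩
    have hne : p ≠ [] := by rintro rfl; simp at h1
    refine ⟨hne, fun y hy => ((hiff y).mp hy).1, fun y h1y hyM => ?_⟩
    exact (hiff y).mpr ⟨h1y, le_trans hyM ((hiff _).mp (Mx_mem hne)).2⟩
  · rintro ⟨hne, h1, hfill⟩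
    exact ⟨Mx p, h1 _ (Mx_mem hne), fun x =>
      ⟨fun hx => ⟨h1 x hx, le_Mx hx⟩, fun ⟨a, b⟩ => hfill x a b⟩⟩

/-- At most one "gap" below the maximum. -/
def Gap1 (u : List ℕ) : Prop :=
  ∀ y z, 1 ≤ y → y ≤ Mx u → y ∉ u → 1 ≤ z → z ≤ Mx u → z ∉ u → y = z

theorem fill_choice {m : ℕ} {u : List ℕ} (hne : u ≠ [])
    (hP1 : ∀ y ∈ u, 1 ≤ y ∧ y ≤ m) (hg : Gap1 u) :
    ∃ x, 1 ≤ x ∧ x ≤ m ∧ x ≤ Mx u ∧ IsPattern (u ++ [x]) ∧ (2 ≤ Mx u → x < Mx u) := by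
  have hMxu : Mx u ∈ u := Mx_mem hne
  have hMx1 : 1 ≤ Mx u := (hP1 _ hMxu).1
  have hMxm : Mx u ≤ m := (hP1 _ hMxu).2
  have hMxa : ∀ g, g ≤ Mx u → Mx (u ++ [g]) = Mx u := by
    intro g hgle
    rw [Mx_append, show Mx [g] = g by simp [Mx]]
    exact max_eq_left hgle
  by_cases hgap : ∃ g, 1 ≤ g ∧ g ≤ Mx u ∧ g ∉ u
  · obtain ⟨g, hg1, hg2, hg3⟩ := hgap
    have hglt : g < Mx u := lt_of_le_of_ne hg2 (fun h => hg3 (h ▸ hMxu))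
    refine ⟨g, hg1, le_trans hg2 hMxm, hg2, ?_, fun _ => hglt⟩
    rw [isPattern_iff]
    refine ⟨by simp, ?_, ?_⟩
    · intro y hy
      rcases List.mem_append.mp hy with hy | hy
      · exact (hP1 y hy).1
      · rw [List.mem_singleton.mp hy]; exact hg1
    · intro y h1y hyM
      rw [hMxa g hg2] at hyM
      by_cases hyu : y ∈ u
      · exact List.mem_append_left _ hyu
      · rw [hg y g h1y hyM hyu hg1 hg2 hg3]; simp
  · push_neg at hgap
    refine ⟨1, le_refl 1, le_trans hMx1 hMxm, hMx1, ?_, fun h2 => by omega⟩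
    rw [isPattern_iff]
    refine ⟨by simp, ?_, ?_⟩
    · intro y hy
      rcases List.mem_append.mp hy with hy | hy
      · exact (hP1 y hy).1
      · rw [List.mem_singleton.mp hy]
    · intro y h1y hyM
      rw [hMxa 1 hMx1] at hyM
      exact List.mem_append_left _ (hgap y h1y hyM)

theorem gap1_drop {p : List ℕ} (hp : IsPattern p) (h2 : 2 ≤ p.length) :
    Gap1 (p.drop 1) := by
  rcases p with _ | ⟨h, q⟩
  · simp at h2
  · simp only [List.drop_one, List.tail_cons]
    intro y z hy1 hy2 hy3 hz1 hz2 hz3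
    rw [isPattern_iff] at hp
    obtain ⟨-, -, hfill⟩ := hp
    have hMq : Mx q ≤ Mx (h :: q) := by
      simp only [Mx, List.foldr]; omega
    have hy : y ∈ h :: q := hfill y hy1 (le_trans hy2 hMq)
    have hz : z ∈ h :: q := hfill z hz1 (le_trans hz2 hMq)
    rcases List.mem_cons.mp hy with rfl | hy
    · rcases List.mem_cons.mp hz with rfl | hz
      · rfl
      · exact absurd hz hz3
    · exact absurd hy hy3

end Patterns

section Reach

/-- One step in the pattern transition graph. -/
def Stp (n m : ℕ) (v w : List ℕ) : Prop :=
  ∃ p : List ℕ, (p.length = n ∧ PatternOver m p) ∧ p.take (n-1) = v ∧ p.drop 1 = w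

/-- Invariant of reachable windows of length `n-1`. -/
def InvW (n m : ℕ) (u : List ℕ) : Prop :=
  u.length = n - 1 ∧ (∀ y ∈ u, 1 ≤ y ∧ y ≤ m) ∧ Gap1 u

theorem step_inv {n m : ℕ} (hn : 2 ≤ n) {u : List ℕ} (hu : InvW n m u) :
    ∃ x, Stp n m u (u.drop 1 ++ [x]) ∧ InvW n m (u.drop 1 ++ [x]) ∧
      Mx (u.drop 1 ++ [x]) ≤ Mx u ∧ (2 ≤ Mx u → x < Mx u) := by
  obtain ⟨hlen, hP1, hg⟩ := hu
  have hne : u ≠ [] := by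
    intro h; subst h; simp at hlen; omega
  obtain ⟨x, hx1, hxm, hxMx, hpat, hxlt⟩ := fill_choice hne hP1 hg
  set p := u ++ [x] with hp
  have hplen : p.length = n := by simp [hp]; omega
  have hpover : PatternOver m p := by
    refine ⟨hpat, ?_⟩
    intro y hy
    rcases List.mem_append.mp hy with hy | hy
    · exact (hP1 y hy).2
    · rw [List.mem_singleton.mp hy]; exact hxm
  have htake : p.take (n-1) = u := by
    rw [hp, List.take_append_of_le_length (by omega), List.take_of_length_le (by omega)]
  have hdrop : p.drop 1 = u.drop 1 ++ [x] := by
    rw [hp, List.drop_append_of_le_length (by omega)]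
  refine ⟨x, ⟨p, ⟨hplen, hpover⟩, htake, hdrop⟩, ?_, ?_, hxlt⟩
  · refine ⟨by simp [List.length_drop]; omega, ?_, ?_⟩
    · intro y hy
      rcases List.mem_append.mp hy with hy | hy
      · exact hP1 y (List.mem_of_mem_drop hy)
      · rw [List.mem_singleton.mp hy]; exact ⟨hx1, hxm⟩
    · rw [← hdrop]
      exact gap1_drop hpat (by omega)
  · rw [Mx_append, show Mx [x] = x by simp [Mx]]
    have h1 : Mx (u.drop 1) ≤ Mx u := by
      rcases eq_or_ne (u.drop 1) [] with h | h
      · rw [h]; simp [Mx]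
      · exact le_Mx (List.mem_of_mem_drop (Mx_mem h))
    exact max_le h1 hxMx

theorem lemC {n m : ℕ} (hn : 2 ≤ n) {K : ℕ} (hK : 2 ≤ K) :
    ∀ (d : ℕ), d ≤ n - 1 → ∀ (u : List ℕ), InvW n m u → Mx u ≤ K →
      (∀ y ∈ u.drop d, y < K) →
      ∃ w, Relation.ReflTransGen (Stp n m) u w ∧ InvW n m w ∧ Mx w < K := by
  intro d
  induction d with
  | zero =>
    intro _ u hu hMx hsm
    have hne : u ≠ [] := by
      intro h; subst h; have := hu.1; simp at this; omega
    refine ⟨u, Relation.ReflTransGen.refl, hu, ?_⟩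
    exact hsm _ (by simpa using Mx_mem hne)
  | succ d ih =>
    intro hd u hu hMx hsm
    by_cases h2 : 2 ≤ Mx u
    · obtain ⟨x, hstep, hinv', hMx', hxlt⟩ := step_inv hn hu
      have hxK : x < K := lt_of_lt_of_le (hxlt h2) hMx
      have hsm' : ∀ y ∈ (u.drop 1 ++ [x]).drop d, y < K := by
        intro y hy
        rw [List.drop_append_of_le_length (by simp [List.length_drop, hu.1]; omega)] at hy
        rcases List.mem_append.mp hy with hy | hy
        · rw [List.drop_drop] at hy
          exact hsm y (by convert hy using 2; omega)
        · rw [List.mem_singleton.mp hy]; exact hxK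
      obtain ⟨w, hr, hw, hlt⟩ := ih (by omega) _ hinv' (le_trans hMx' hMx) hsm'
      exact ⟨w, Relation.ReflTransGen.head hstep hr, hw, hlt⟩
    · exact ⟨u, Relation.ReflTransGen.refl, hu, by omega⟩

theorem lemA {n m : ℕ} (hn : 2 ≤ n) :
    ∀ (K : ℕ) (u : List ℕ), Mx u ≤ K → InvW n m u →
      Relation.ReflTransGen (Stp n m) u (List.replicate (n-1) 1) := by
  intro K
  induction K with
  | zero =>
    intro u hM hu
    exfalso
    have hne : u ≠ [] := by
      intro h; subst h; have := hu.1; simp at this; omega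
    have := (hu.2.1 _ (Mx_mem hne)).1
    have := le_Mx (Mx_mem hne)
    omega
  | succ K ih =>
    intro u hM hu
    by_cases h : Mx u ≤ K
    · exact ih u h hu
    · by_cases h2 : 2 ≤ Mx u
      · obtain ⟨w, hr, hw, hlt⟩ := lemC hn h2 (n-1) (le_refl _) u hu (le_refl _)
          (by intro y hy; rw [← hu.1, List.drop_length] at hy; simp at hy)
        exact hr.trans (ih w (by omega) hw)
      · have hone : ∀ y ∈ u, y = 1 := by
          intro y hy
          have := (hu.2.1 y hy).1
          have := le_Mx hy
          omega
        have : u = List.replicate (n-1) 1 := by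
          rw [List.eq_replicate_iff]
          exact ⟨hu.1, hone⟩
        rw [this]

end Reach

section Rev

theorem isPattern_of_mem_iff {p q : List ℕ} (h : ∀ x, x ∈ p ↔ x ∈ q)
    (hp : IsPattern p) : IsPattern q := by
  obtain ⟨k, hk, hiff⟩ := hp
  exact ⟨k, hk, fun x => (h x).symm.trans (hiff x)⟩

theorem stp_rev {n m : ℕ} (hn : 1 ≤ n) {v w : List ℕ} (h : Stp n m v w) :
    Stp n m w.reverse v.reverse := by
  obtain ⟨p, ⟨hlen, hpat, hover⟩, htake, hdrop⟩ := h
  refine ⟨p.reverse, ⟨by simp [hlen], ?_, fun x hx => hover x (List.mem_reverse.mp hx)⟩, ?_, ?_⟩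
  · exact isPattern_of_mem_iff (fun x => (List.mem_reverse (x := x) (as := p)).symm) hpat
  · rw [← hdrop, List.reverse_drop, hlen]
  · rw [← htake, List.reverse_take, hlen, show n - (n-1) = 1 by omega]

theorem reach_rev {n m : ℕ} (hn : 1 ≤ n) {v w : List ℕ}
    (h : Relation.ReflTransGen (Stp n m) v w) :
    Relation.ReflTransGen (Stp n m) w.reverse v.reverse := by
  induction h with
  | refl => exact Relation.ReflTransGen.refl
  | tail hstep ih => exact Relation.ReflTransGen.head (stp_rev hn ih) (by assumption)

theorem conn_main {n m : ℕ} (hn : 1 ≤ n) {p q : List ℕ}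
    (hp : p.length = n ∧ PatternOver m p) (hq : q.length = n ∧ PatternOver m q) :
    Relation.ReflTransGen (Stp n m) (p.drop 1) (q.take (n-1)) := by
  rcases eq_or_lt_of_le hn with h1 | h2
  · -- n = 1 : both are []
    have hp1 : p.drop 1 = [] := by
      rw [List.drop_eq_nil_iff]; omega
    have hq1 : q.take (n-1) = [] := by
      rw [show n - 1 = 0 by omega]; simp
    rw [hp1, hq1]
  · have hn2 : 2 ≤ n := h2
    have invp : InvW n m (p.drop 1) := by
      refine ⟨by simp [hp.1], ?_, gap1_drop hp.2.1 (by omega)⟩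
      intro y hy
      have hym := hp.2.2 y (List.mem_of_mem_drop hy)
      have hy1 : 1 ≤ y := (isPattern_iff.mp hp.2.1).2.1 y (List.mem_of_mem_drop hy)
      exact ⟨hy1, hym⟩
    have h1 : Relation.ReflTransGen (Stp n m) (p.drop 1) (List.replicate (n-1) 1) :=
      lemA hn2 (Mx (p.drop 1)) _ (le_refl _) invp
    -- reverse of q
    have hqr : q.reverse.length = n ∧ PatternOver m q.reverse := by
      refine ⟨by simp [hq.1], ?_, fun x hx => hq.2.2 x (List.mem_reverse.mp hx)⟩
      exact isPattern_of_mem_iff (fun x => (List.mem_reverse (x := x) (as := q)).symm) hq.2.1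
    have invq : InvW n m (q.reverse.drop 1) := by
      refine ⟨by simp [hq.1], ?_, gap1_drop hqr.2.1 (by simp [hq.1]; omega)⟩
      intro y hy
      have hym := hqr.2.2 y (List.mem_of_mem_drop hy)
      have hy1 : 1 ≤ y := (isPattern_iff.mp hqr.2.1).2.1 y (List.mem_of_mem_drop hy)
      exact ⟨hy1, hym⟩
    have h2' : Relation.ReflTransGen (Stp n m) (q.reverse.drop 1) (List.replicate (n-1) 1) :=
      lemA hn2 (Mx (q.reverse.drop 1)) _ (le_refl _) invq
    have h3 := reach_rev hn h2'
    rw [List.reverse_replicate] at h3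
    have h4 : (q.reverse.drop 1).reverse = q.take (n-1) := by
      rw [List.reverse_drop]
      simp [hq.1]
    rw [h4] at h3
    exact h1.trans h3

end Rev

section Final

theorem finite_patE (n m : ℕ) : Finite {p : List ℕ // p.length = n ∧ PatternOver m p} := by
  apply Finite.of_injective
    (fun e : {p : List ℕ // p.length = n ∧ PatternOver m p} =>
      (fun i : Fin n => (⟨min (e.1.getD i 0) m, by omega⟩ : Fin (m+1))))
  intro e e' h
  apply Subtype.ext
  apply List.ext_getElem (by rw [e.2.1, e'.2.1])
  intro j h1 h2
  have hj : j < n := by rw [← e.2.1]; exact h1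
  have hmem : e.1[j] ∈ e.1 := List.getElem_mem h1
  have hmem' : e'.1[j] ∈ e'.1 := List.getElem_mem h2
  have hb : e.1[j] ≤ m := e.2.2.2 _ hmem
  have hb' : e'.1[j] ≤ m := e'.2.2.2 _ hmem'
  have := congrFun h ⟨j, hj⟩
  simp only [Fin.mk.injEq] at this
  rw [List.getD_eq_getElem _ _ h1, List.getD_eq_getElem _ _ h2] at this
  omega

/-- Cyclic rotation of a pattern by one position. -/
def rotE {n m : ℕ} (e : {p : List ℕ // p.length = n ∧ PatternOver m p}) :
    {p : List ℕ // p.length = n ∧ PatternOver m p} :=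
  ⟨e.1.drop 1 ++ e.1.take 1, by
    have h := e.2
    refine ⟨by simp [h.1]; omega, ?_, ?_⟩
    · refine isPattern_of_mem_iff (fun x => ?_) h.2.1
      conv_lhs => rw [← List.take_append_drop 1 e.1]
      simp only [List.mem_append]
      tauto
    · intro x hx
      simp only [List.mem_append] at hx
      rcases hx with hx | hx
      · exact h.2.2 x (List.mem_of_mem_drop hx)
      · exact h.2.2 x (List.mem_of_mem_take hx)⟩

theorem bal_patE (n m : ℕ) (hn : 1 ≤ n)
    [Fintype {p : List ℕ // p.length = n ∧ PatternOver m p}] (v : List ℕ) :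
    (Finset.univ.filter
      (fun e : {p : List ℕ // p.length = n ∧ PatternOver m p} => e.1.drop 1 = v)).card
    = (Finset.univ.filter
      (fun e : {p : List ℕ // p.length = n ∧ PatternOver m p} => e.1.take (n-1) = v)).card := by
  have hdlen : ∀ e : {p : List ℕ // p.length = n ∧ PatternOver m p},
      (e.1.drop 1).length = n - 1 := fun e => by simp [e.2.1]
  have htlen : ∀ e : {p : List ℕ // p.length = n ∧ PatternOver m p},
      (e.1.take 1).length = 1 := fun e => by simp [e.2.1]; omega
  apply Finset.card_bij (fun e _ => rotE e)
  · intro e he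
    simp only [Finset.mem_filter, Finset.mem_univ, true_and] at he ⊢
    rw [show (rotE e).1 = e.1.drop 1 ++ e.1.take 1 from rfl,
      List.take_left' (hdlen e), he]
  · intro e1 h1 e2 h2 heq
    apply Subtype.ext
    have r1 : (rotE e1).1 = e1.1.drop 1 ++ e1.1.take 1 := rfl
    have r2 : (rotE e2).1 = e2.1.drop 1 ++ e2.1.take 1 := rfl
    have hv : (rotE e1).1 = (rotE e2).1 := congrArg Subtype.val heq
    have k1 : (rotE e1).1.drop (n-1) = e1.1.take 1 := by rw [r1, List.drop_left' (hdlen e1)]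
    have k2 : (rotE e2).1.drop (n-1) = e2.1.take 1 := by rw [r2, List.drop_left' (hdlen e2)]
    have k3 : (rotE e1).1.take (n-1) = e1.1.drop 1 := by rw [r1, List.take_left' (hdlen e1)]
    have k4 : (rotE e2).1.take (n-1) = e2.1.drop 1 := by rw [r2, List.take_left' (hdlen e2)]
    calc e1.1 = e1.1.take 1 ++ e1.1.drop 1 := (List.take_append_drop 1 e1.1).symm
    _ = e2.1.take 1 ++ e2.1.drop 1 := by rw [← k1, ← k2, ← k3, ← k4, hv]
    _ = e2.1 := List.take_append_drop 1 e2.1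
  · intro q hq
    simp only [Finset.mem_filter, Finset.mem_univ, true_and] at hq
    have hqd : (q.1.drop (n-1)).length = 1 := by simp [q.2.1]; omega
    have hqt : (q.1.take (n-1)).length = n - 1 := by simp [q.2.1]
    refine ⟨⟨q.1.drop (n-1) ++ q.1.take (n-1), ?_⟩, ?_, ?_⟩
    · refine ⟨by simp [q.2.1]; try omega, ?_, ?_⟩
      · refine isPattern_of_mem_iff (fun x => ?_) q.2.2.1
        conv_lhs => rw [← List.take_append_drop (n-1) q.1]
        simp only [List.mem_append]
        tauto
      · intro x hx
        simp only [List.mem_append] at hx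
        rcases hx with hx | hx
        · exact q.2.2.2 x (List.mem_of_mem_drop hx)
        · exact q.2.2.2 x (List.mem_of_mem_take hx)
    · simp only [Finset.mem_filter, Finset.mem_univ, true_and]
      show (q.1.drop (n-1) ++ q.1.take (n-1)).drop 1 = v
      rw [List.drop_left' hqd, hq]
    · apply Subtype.ext
      show (q.1.drop (n-1) ++ q.1.take (n-1)).drop 1
          ++ (q.1.drop (n-1) ++ q.1.take (n-1)).take 1 = q.1
      rw [List.drop_left' hqd, List.take_left' hqd, List.take_append_drop]

end Final

theorem stmt_16 (n m : ℕ) (hn : 1 ≤ n) (hm : 1 ≤ m) :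
    -- there exists a universal cycle for word patterns of length n over [m]:
    -- a cyclic sequence of N letters of [m] (N = number of such patterns)
    -- whose N cyclic windows of length n are exactly the patterns, each once
    ∃ a : ZMod (Nat.card {p : List ℕ // p.length = n ∧ PatternOver m p}) → ℕ,
      (∀ i, 1 ≤ a i ∧ a i ≤ m) ∧
      Set.BijOn (fun i => List.ofFn fun t : Fin n => a (i + 1 + (t : ℕ)))
        Set.univ {p : List ℕ | p.length = n ∧ PatternOver m p} := by

  classical
  haveI : Finite {p : List ℕ // p.length = n ∧ PatternOver m p} := finite_patE n m
  haveI : Fintype {p : List ℕ // p.length = n ∧ PatternOver m p} :=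
    Fintype.ofFinite _
  set E := {p : List ℕ // p.length = n ∧ PatternOver m p} with hE
  set s : E → List ℕ := fun e => e.1.take (n-1) with hs
  set t : E → List ℕ := fun e => e.1.drop 1 with ht
  -- a distinguished pattern
  have hrep : (List.replicate n 1).length = n ∧ PatternOver m (List.replicate n 1) := by
    refine ⟨by simp, ⟨1, le_refl 1, fun x => ?_⟩, fun x hx => ?_⟩
    · constructor
      · intro hx; rw [List.mem_replicate] at hx; omega
      · intro hx; rw [List.mem_replicate]; omega
    · rw [List.mem_replicate] at hx; omega
  have e0 : E := ⟨List.replicate n 1, hrep⟩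
  -- balance and connectivity
  have bal : ∀ v, (Finset.univ.filter (fun e : E => t e = v)).card
      = (Finset.univ.filter (fun e : E => s e = v)).card := fun v => bal_patE n m hn v
  have conn : ∀ e e' : E, Relation.ReflTransGen
      (fun v w => ∃ d : E, s d = v ∧ t d = w) (t e) (s e') := by
    intro e e'
    have h := conn_main hn e.2 e'.2
    refine Relation.ReflTransGen.mono ?_ _ _ h
    rintro v w ⟨p, hp, htk, hdp⟩
    exact ⟨⟨p, hp⟩, htk, hdp⟩
  obtain ⟨C, v1, hC, hCnd, hCall⟩ := euler_exists bal conn e0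
  have hCne : C ≠ [] := List.ne_nil_of_mem (hCall e0)
  set N := Nat.card {p : List ℕ // p.length = n ∧ PatternOver m p} with hN
  have hNC : C.length = N := by
    rw [hN, Nat.card_eq_fintype_card, ← Finset.card_univ,
      show (Finset.univ : Finset E) = C.toFinset from
        (Finset.eq_univ_iff_forall.mpr (fun e => List.mem_toFinset.mpr (hCall e))).symm,
      List.toFinset_card_of_nodup hCnd]
  have hNpos : 0 < N := by
    rw [← hNC]; exact List.length_pos_iff.mpr hCne
  haveI : NeZero N := ⟨hNpos.ne'⟩
  -- the cyclic sequence of edges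
  set eC : ZMod N → E := fun i => C.get ⟨i.val, by rw [hNC]; exact ZMod.val_lt i⟩ with heC
  have hgeteq : ∀ (j k : ℕ) (hj : j < C.length) (hk : k < C.length), j = k →
      C.get ⟨j, hj⟩ = C.get ⟨k, hk⟩ := by
    intro j k hj hk h; subst h; rfl
  have hcastval : ∀ (j : ℕ), j < N → ((j : ZMod N)).val = j := by
    intro j hj; rw [ZMod.val_natCast, Nat.mod_eq_of_lt hj]
  have hvalsucc : ∀ i : ZMod N, (i + 1).val = (i.val + 1) % N := by
    intro i
    conv_lhs => rw [show i + 1 = ((i.val + 1 : ℕ) : ZMod N) by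
      push_cast [ZMod.natCast_rightInverse i]; ring]
    rw [ZMod.val_natCast]
  obtain ⟨hchain, hends⟩ := uwalks_get hC
  have hadj : ∀ i : ZMod N, t (eC i) = s (eC (i + 1)) := by
    intro i
    have hiv : i.val < N := ZMod.val_lt i
    by_cases hlast : i.val + 1 = N
    · have hv0 : (i + 1).val = 0 := by rw [hvalsucc, hlast, Nat.mod_self]
      have h0 := hends (by rw [hNC]; omega)
      rw [show eC (i+1) = C.get ⟨0, by rw [hNC]; omega⟩ from hgeteq _ _ _ _ hv0,
        show eC i = C.get ⟨C.length - 1, by omega⟩ from hgeteq _ _ _ _ (by omega)]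
      rw [h0.2, h0.1]
    · have hv1 : (i + 1).val = i.val + 1 := by
        rw [hvalsucc, Nat.mod_eq_of_lt (by omega)]
      rw [show eC (i+1) = C.get ⟨i.val + 1, by rw [hNC]; omega⟩ from hgeteq _ _ _ _ hv1]
      exact hchain i.val (by rw [hNC]; omega)
  -- the letter sequence
  set a : ZMod N → ℕ := fun i => (eC i).1.getD (n-1) 0 with ha
  have hlenE : ∀ e : E, e.1.length = n := fun e => e.2.1
  have hentry : ∀ (i : ZMod N) (pos : ℕ), pos + 1 < n →
      (eC (i+1)).1.getD pos 0 = (eC i).1.getD (pos+1) 0 := by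
    intro i pos hpos
    rw [List.getD_eq_getElem _ _ (by rw [hlenE]; omega),
      List.getD_eq_getElem _ _ (by rw [hlenE]; omega)]
    have hidx : ∀ (L : List ℕ) (j k : ℕ) (hj : j < L.length) (hk : k < L.length),
        j = k → L[j]'hj = L[k]'hk := by
      intro L j k hj hk h; subst h; rfl
    have h1 : (eC (i+1)).1[pos]'(by rw [hlenE]; omega)
        = ((eC (i+1)).1.take (n-1))[pos]'(by simp [hlenE]; omega) :=
      List.getElem_take.symm
    have hts : ((eC i).1.drop 1) = ((eC (i+1)).1.take (n-1)) := hadj i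
    have h4 := List.getElem_of_eq hts.symm
      (show pos < (((eC (i+1)).1.take (n-1))).length by simp [hlenE]; omega)
    have h2 : ((eC i).1.drop 1)[pos]'(by simp [hlenE]; omega)
        = (eC i).1[1+pos]'(by rw [hlenE]; omega) := List.getElem_drop
    rw [h1, h4, h2]
    exact hidx _ _ _ _ _ (by omega)
  have hG : ∀ (d : ℕ), d ≤ n - 1 → ∀ i : ZMod N,
      (eC i).1.getD (n-1-d) 0 = a (i - (d : ℕ)) := by
    intro d
    induction d with
    | zero => intro _ i; simp [ha]
    | succ d ih =>
      intro hd i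
      have h1 : (eC i).1.getD (n-1-(d+1)) 0 = (eC (i-1)).1.getD ((n-1-(d+1))+1) 0 := by
        have := hentry (i - 1) (n-1-(d+1)) (by omega)
        rw [sub_add_cancel] at this
        exact this
      rw [h1, show (n-1-(d+1))+1 = n-1-d by omega, ih (by omega) (i-1)]
      congr 1
      push_cast
      ring
  have hwindow : ∀ i : ZMod N,
      (List.ofFn fun t : Fin n => a (i + 1 + (t : ℕ))) = (eC (i + (n : ℕ))).1 := by
    intro i
    apply List.ext_getElem (by simp [hlenE])
    intro k h1 h2
    have hk : k < n := by simpa using h1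
    rw [List.getElem_ofFn]
    have hGk := hG (n-1-k) (by omega) (i + (n : ℕ))
    rw [show n-1-(n-1-k) = k by omega] at hGk
    rw [List.getD_eq_getElem _ _ (by rw [hlenE]; omega)] at hGk
    rw [hGk]
    congr 1
    simp only [Fin.val_mk]
    rw [show n-1-k = n - (1+k) by omega, Nat.cast_sub (by omega)]
    push_cast
    ring
  refine ⟨a, ?_, ?_⟩
  · intro i
    have hmem : (eC i).1.getD (n-1) 0 ∈ (eC i).1 := by
      rw [List.getD_eq_getElem _ _ (by rw [hlenE]; omega)]
      exact List.getElem_mem _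
    have hover := (eC i).2.2
    exact ⟨(isPattern_iff.mp hover.1).2.1 _ hmem, hover.2 _ hmem⟩
  · have hfeq : (fun i => List.ofFn fun t : Fin n => a (i + 1 + (t : ℕ)))
        = fun i : ZMod N => (eC (i + (n : ℕ))).1 := funext hwindow
    rw [hfeq]
    have heCinj : Function.Injective eC := by
      intro i j hij
      have := List.nodup_iff_injective_get.mp hCnd hij
      have hval : i.val = j.val := by
        simpa using congrArg Fin.val this
      exact ZMod.val_injective N hval
    refine ⟨?_, ?_, ?_⟩
    · intro i _
      exact (eC (i + (n : ℕ))).2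
    · intro i _ j _ hij
      have : eC (i + (n : ℕ)) = eC (j + (n : ℕ)) := Subtype.ext hij
      have := heCinj this
      exact add_right_cancel this
    · intro p hp
      have hpE : p.length = n ∧ PatternOver m p := hp
      obtain ⟨⟨j, hj⟩, hget⟩ := List.mem_iff_get.mp (hCall ⟨p, hpE⟩)
      refine ⟨((j : ZMod N)) - (n : ℕ), Set.mem_univ _, ?_⟩
      have hjN : j < N := by rw [← hNC]; exact hj
      show (eC ((j : ZMod N) - (n : ℕ) + (n : ℕ))).1 = p
      rw [sub_add_cancel]
      have : eC (j : ZMod N) = C.get ⟨j, hj⟩ :=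
        hgeteq _ _ _ _ (hcastval j hjN)
      rw [this, hget]
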